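/- Let X, Y be fuzzy strong φ-b-normed linear spaces (same φ and K) with the t-norm *₂ of Y lower semi-continuous. If Y is l-fuzzy complete, then BF(X,Y), the space of fuzzy bounded linear operators equipped with the operator fuzzy norm N(T,s) = sup{α ∈ (0,1) : sup_{x≠0} inf{t/d_{1−α}(x) : t>0, N₂(Tx,t) ≥ α} ≤ s}, is l-fuzzy complete: every sequence (Tₙ) with lim_{m,n→∞} inf{t>0 : N(Tₘ − Tₙ, t) > 1−α} = 0 for all α ∈ (0,1) is l-fuzzy convergent to some T ∈ BF(X,Y). -/

import Mathlib

open Filter Topology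

structure PhiFun (φ : ℝ → ℝ) : Prop where
  even : ∀ t, φ (-t) = φ t
  one : φ 1 = 1
  strictMono : StrictMonoOn φ (Set.Ioi 0)
  contOn : ContinuousOn φ (Set.Ioi 0)
  tendsto_zero : Tendsto φ (nhdsWithin 0 (Set.Ioi 0)) (nhds 0)
  tendsto_atTop : Tendsto φ atTop atTop

structure IsTNorm (star : ℝ → ℝ → ℝ) : Prop where
  mem : ∀ a ∈ Set.Icc (0:ℝ) 1, ∀ b ∈ Set.Icc (0:ℝ) 1, star a b ∈ Set.Icc (0:ℝ) 1
  assoc : ∀ a b c, star (star a b) c = star a (star b c)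
  comm : ∀ a b, star a b = star b a
  one_right : ∀ a ∈ Set.Icc (0:ℝ) 1, star a 1 = a
  mono : ∀ a b c d, a ≤ b → c ≤ d → star a c ≤ star b d

structure IsFuzzyPhiBNorm {X : Type*} [AddCommGroup X] [Module ℝ X]
    (N : X → ℝ → ℝ) (φ : ℝ → ℝ) (K : ℝ) (star : ℝ → ℝ → ℝ) : Prop where
  one_le_K : 1 ≤ K
  phi : PhiFun φ
  tnorm : IsTNorm star
  mem : ∀ x t, N x t ∈ Set.Icc (0:ℝ) 1
  bN1 : ∀ x : X, ∀ t ≤ (0:ℝ), N x t = 0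
  bN2 : ∀ x : X, (∀ t > (0:ℝ), N x t = 1) ↔ x = 0
  bN3 : ∀ (c : ℝ) (x : X), ∀ t > (0:ℝ), φ c ≠ 0 → N (c • x) t = N x (t / φ c)
  bN4 : ∀ (x y : X) (s t : ℝ), star (N x s) (N y t) ≤ N (x + y) (s + K * t)
  bN5 : ∀ x : X, Monotone (N x) ∧ Tendsto (N x) atTop (nhds 1)

noncomputable def FuzzyBounded {X Y : Type*} [AddCommGroup X] [Module ℝ X]
    [AddCommGroup Y] [Module ℝ Y]
    (N1 : X → ℝ → ℝ) (N2 : Y → ℝ → ℝ) (K : ℝ) (T : X →ₗ[ℝ] Y) : Prop :=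
  ∀ α ∈ Set.Ioo (0:ℝ) 1, ∃ M > (0:ℝ), ∀ x : X,
    sInf {t | 0 < t ∧ α ≤ N2 (T x) (K * t)} ≤ M * sInf {t | 0 < t ∧ 1 - α ≤ N1 x t}

noncomputable def dd {X : Type*} [AddCommGroup X] [Module ℝ X]
    (N1 : X → ℝ → ℝ) (α : ℝ) (x : X) : ℝ :=
  sInf {t | 0 < t ∧ 1 - α ≤ N1 x t}

noncomputable def opSup {X Y : Type*} [AddCommGroup X] [Module ℝ X]
    [AddCommGroup Y] [Module ℝ Y]
    (N1 : X → ℝ → ℝ) (N2 : Y → ℝ → ℝ) (T : X →ₗ[ℝ] Y) (α : ℝ) : ℝ :=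
  sSup {r | ∃ x : X, x ≠ 0 ∧
    r = sInf ((fun t => t / dd N1 α x) '' {t | 0 < t ∧ α ≤ N2 (T x) t})}

open scoped Classical in
noncomputable def opN {X Y : Type*} [AddCommGroup X] [Module ℝ X]
    [AddCommGroup Y] [Module ℝ Y]
    (N1 : X → ℝ → ℝ) (N2 : Y → ℝ → ℝ) (T : X →ₗ[ℝ] Y) (s : ℝ) : ℝ :=
  if T = 0 ∧ s = 0 then 0
  else sSup {α | α ∈ Set.Ioo (0:ℝ) 1 ∧ opSup N1 N2 T α ≤ s}

/-!
Everything is read off through the level norms `‖y‖_β = inf {t > 0 | N(y, t) ≥ β}`. Lower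
semicontinuity of `*₂` provides, for each level `β`, a level `δ` with `β ≤ δ *₂ δ`, and then
`‖y + z‖_β ≤ ‖y‖_δ + K ‖z‖_δ`; so the levels behave like a family of quasi-norms, limits are
unique (a vector of level norm `0` at every level is `0`) and limits of linear maps are linear.
Convergence in the operator fuzzy norm amounts to `‖U x‖_α ≤ ε d_{1-α}(x)` uniformly in `x`, at
every level. A Cauchy sequence `Tₙ` is therefore pointwise Cauchy; its pointwise limit `S` is
linear, `Tₙ → S` uniformly at each level (let `m → ∞` in the Cauchy bound for `Tₙ - Tₘ`), and
`S = Tₙ - (Tₙ - S)` is fuzzy bounded.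
-/

open Set Pointwise

lemma PhiFun.pos {φ : ℝ → ℝ} (hφ : PhiFun φ) {c : ℝ} (hc : c ≠ 0) : 0 < φ c := by
  wlog hc' : 0 < c generalizing c
  · rw [← hφ.even]
    exact this (neg_ne_zero.2 hc) (neg_pos.2 (lt_of_le_of_ne (not_lt.1 hc') hc))
  have hhalf : 0 ≤ φ (c / 2) := by
    refine le_of_tendsto hφ.tendsto_zero ?_
    filter_upwards [Ioo_mem_nhdsGT (half_pos hc')] with t ht
    exact (hφ.strictMono ht.1 (half_pos hc') ht.2).le
  exact hhalf.trans_lt (hφ.strictMono (half_pos hc') hc' (half_lt_self hc'))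

lemma IsTNorm.map_self_le {star : ℝ → ℝ → ℝ} (h : IsTNorm star) {a : ℝ}
    (ha : a ∈ Icc (0:ℝ) 1) : star a a ≤ a :=
  (h.mono a a a 1 le_rfl ha.2).trans_eq (h.one_right a ha)

lemma sInf_setOf_pos_and_mul {a : ℝ} (ha : 0 < a) (P : ℝ → Prop) :
    sInf {t | 0 < t ∧ P (a * t)} = a⁻¹ * sInf {t | 0 < t ∧ P t} := by
  have hset : {t | 0 < t ∧ P (a * t)} = a⁻¹ • {t | 0 < t ∧ P t} := by
    ext t
    rw [Set.mem_smul_set_iff_inv_smul_mem₀ (inv_ne_zero ha.ne'), inv_inv, smul_eq_mul]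
    simp [mul_pos_iff_of_pos_left ha]
  rw [hset, Real.sInf_smul_of_nonneg (inv_nonneg.2 ha.le), smul_eq_mul]

lemma sInf_image_div (A : Set ℝ) {D : ℝ} (hD : 0 ≤ D) :
    sInf ((· / D) '' A) = sInf A / D := by
  have : (· / D) = fun t : ℝ => D⁻¹ • t := by
    funext t; rw [smul_eq_mul, div_eq_inv_mul]
  rw [this, Set.image_smul, Real.sInf_smul_of_nonneg (inv_nonneg.2 hD), smul_eq_mul,
    inv_mul_eq_div]

lemma tendsto_zero_of_forall_eventually_le {ι : Type*} {F : Filter ι} {g : ι → ℝ}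
    (h0 : ∀ i, 0 ≤ g i) (h : ∀ ε > 0, ∀ᶠ i in F, g i ≤ ε) : Tendsto g F (𝓝 0) :=
  tendsto_order.2 ⟨fun _ ha => Eventually.of_forall fun i => ha.trans_le (h0 i),
    fun a ha => (h (a / 2) (half_pos ha)).mono fun _ hi => hi.trans_lt (half_lt_self ha)⟩

/-- The `β`-norm of the decomposition theorem for fuzzy norms; `dd N α = levelNorm N (1 - α)`. -/
noncomputable def levelNorm {Y : Type*} (N : Y → ℝ → ℝ) (β : ℝ) (y : Y) : ℝ :=
  sInf {t | 0 < t ∧ β ≤ N y t}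

section LevelNorm

variable {Y : Type*} {N : Y → ℝ → ℝ}

lemma levelNorm_nonneg (β : ℝ) (y : Y) : 0 ≤ levelNorm N β y :=
  Real.sInf_nonneg fun _ ht => ht.1.le

lemma levelNorm_le {β u : ℝ} {y : Y} (hu : 0 < u) (h : β ≤ N y u) : levelNorm N β y ≤ u :=
  csInf_le ⟨0, fun _ ht => ht.1.le⟩ ⟨hu, h⟩

variable [AddCommGroup Y] [Module ℝ Y]

lemma dd_nonneg (α : ℝ) (y : Y) : 0 ≤ dd N α y :=
  levelNorm_nonneg (1 - α) y

variable {φ : ℝ → ℝ} {K : ℝ} {star : ℝ → ℝ → ℝ} (hN : IsFuzzyPhiBNorm N φ K star)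
include hN

lemma IsFuzzyPhiBNorm.K_pos : 0 < K :=
  one_pos.trans_le hN.one_le_K

lemma IsFuzzyPhiBNorm.exists_lt_apply {β : ℝ} (hβ : β < 1) (y : Y) : ∃ t, 0 < t ∧ β < N y t :=
  ((eventually_gt_atTop 0).and ((hN.bN5 y).2.eventually (eventually_gt_nhds hβ))).exists

lemma IsFuzzyPhiBNorm.levelSet_nonempty {β : ℝ} (hβ : β < 1) (y : Y) :
    {t | 0 < t ∧ β ≤ N y t}.Nonempty :=
  let ⟨t, ht, hβt⟩ := hN.exists_lt_apply hβ y
  ⟨t, ht, hβt.le⟩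

lemma levelNorm_le_sInf_lt {β : ℝ} (hβ : β < 1) (y : Y) :
    levelNorm N β y ≤ sInf {t | 0 < t ∧ β < N y t} :=
  csInf_le_csInf ⟨0, fun _ ht => ht.1.le⟩ (hN.exists_lt_apply hβ y)
    fun _ ht => ⟨ht.1, ht.2.le⟩

lemma sInf_lt_le_levelNorm {γ β : ℝ} (hγβ : γ < β) (hβ : β < 1) (y : Y) :
    sInf {t | 0 < t ∧ γ < N y t} ≤ levelNorm N β y :=
  csInf_le_csInf ⟨0, fun _ ht => ht.1.le⟩ (hN.levelSet_nonempty hβ y)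
    fun _ ht => ⟨ht.1, hγβ.trans_le ht.2⟩

lemma le_apply_of_levelNorm_lt {β u : ℝ} {y : Y} (hβ : β < 1) (h : levelNorm N β y < u) :
    β ≤ N y u := by
  obtain ⟨t, ⟨-, hβt⟩, htu⟩ := exists_lt_of_csInf_lt (hN.levelSet_nonempty hβ y) h
  exact hβt.trans ((hN.bN5 y).1 htu.le)

lemma levelNorm_mono {β β' : ℝ} (hβ' : β' < 1) (h : β ≤ β') (y : Y) :
    levelNorm N β y ≤ levelNorm N β' y :=
  csInf_le_csInf ⟨0, fun _ ht => ht.1.le⟩ (hN.levelSet_nonempty hβ' y)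
    fun _ ht => ⟨ht.1, h.trans ht.2⟩

lemma dd_anti {α α' : ℝ} (hα : 0 < α) (h : α ≤ α') (y : Y) : dd N α' y ≤ dd N α y :=
  levelNorm_mono hN (by linarith) (by linarith) y

lemma levelNorm_zero {β : ℝ} (hβ : β < 1) : levelNorm N β (0 : Y) = 0 := by
  have hset : {t | 0 < t ∧ β ≤ N 0 t} = Ioi 0 := by
    ext t
    refine ⟨fun ht => ht.1, fun ht => ⟨ht, ?_⟩⟩
    rw [(hN.bN2 0).2 rfl t ht]
    exact hβ.le
  rw [levelNorm, hset, csInf_Ioi]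

lemma levelNorm_smul {c : ℝ} (hc : c ≠ 0) (β : ℝ) (y : Y) :
    levelNorm N β (c • y) = φ c * levelNorm N β y := by
  have hφ := hN.phi.pos hc
  have hset : {t | 0 < t ∧ β ≤ N (c • y) t} = {t | 0 < t ∧ β ≤ N y ((φ c)⁻¹ * t)} := by
    ext t
    refine and_congr_right fun ht => ?_
    rw [hN.bN3 c y t ht hφ.ne', inv_mul_eq_div]
  rw [levelNorm, hset, sInf_setOf_pos_and_mul (inv_pos.2 hφ) (fun t => β ≤ N y t), inv_inv,
    levelNorm]

lemma levelNorm_neg (β : ℝ) (y : Y) : levelNorm N β (-y) = levelNorm N β y := by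
  rw [← neg_one_smul ℝ y, levelNorm_smul hN (neg_ne_zero.2 one_ne_zero), hN.phi.even,
    hN.phi.one, one_mul]

lemma levelNorm_sub_comm (β : ℝ) (y z : Y) : levelNorm N β (y - z) = levelNorm N β (z - y) := by
  rw [← neg_sub, levelNorm_neg hN]

lemma levelNorm_add_le {β δ : ℝ} (hδ : δ < 1) (hβδ : β ≤ star δ δ) (y z : Y) :
    levelNorm N β (y + z) ≤ levelNorm N δ y + K * levelNorm N δ z := by
  have hK := hN.K_pos
  refine le_of_forall_pos_le_add fun ε hε => ?_
  have hs := le_apply_of_levelNorm_lt hN hδ (lt_add_of_pos_right (levelNorm N δ y) (half_pos hε))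
  have ht := le_apply_of_levelNorm_lt hN hδ
    (lt_add_of_pos_right (levelNorm N δ z) (div_pos hε (mul_pos two_pos hK)))
  have hmem : β ≤ N (y + z) (levelNorm N δ y + ε / 2 + K * (levelNorm N δ z + ε / (2 * K))) :=
    hβδ.trans ((hN.tnorm.mono _ _ _ _ hs ht).trans (hN.bN4 _ _ _ _))
  have hy := levelNorm_nonneg (N := N) δ y
  have hz := levelNorm_nonneg (N := N) δ z
  calc levelNorm N β (y + z)
      ≤ levelNorm N δ y + ε / 2 + K * (levelNorm N δ z + ε / (2 * K)) :=
        levelNorm_le (by positivity) hmem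
    _ = levelNorm N δ y + K * levelNorm N δ z + ε := by field_simp; ring

lemma eq_zero_of_forall_levelNorm_eq_zero {y : Y}
    (h : ∀ β ∈ Ioo (0:ℝ) 1, levelNorm N β y = 0) : y = 0 := by
  refine (hN.bN2 y).1 fun t ht => le_antisymm (hN.mem y t).2 (not_lt.1 fun hlt => ?_)
  have hβ : (N y t + 1) / 2 ∈ Ioo (0:ℝ) 1 := by
    constructor <;> linarith [(hN.mem y t).1]
  have := le_apply_of_levelNorm_lt hN hβ.2 ((h _ hβ).trans_lt ht)
  linarith

end LevelNorm

section Convergence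

variable {ι Y : Type*} [AddCommGroup Y] [Module ℝ Y] {N : Y → ℝ → ℝ} {φ : ℝ → ℝ} {K : ℝ}
  {star : ℝ → ℝ → ℝ} (hN : IsFuzzyPhiBNorm N φ K star) {F : Filter ι}
include hN

lemma tendsto_sInf_lt_iff {u : ι → Y} :
    (∀ α ∈ Ioo (0:ℝ) 1, Tendsto (fun i => sInf {t | 0 < t ∧ 1 - α < N (u i) t}) F (𝓝 0)) ↔
      ∀ β ∈ Ioo (0:ℝ) 1, Tendsto (fun i => levelNorm N β (u i)) F (𝓝 0) := by
  refine ⟨fun h β hβ => ?_, fun h α hα => ?_⟩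
  · have hlim := h (1 - β) ⟨by linarith [hβ.2], by linarith [hβ.1]⟩
    simp only [sub_sub_cancel] at hlim
    exact squeeze_zero (fun i => levelNorm_nonneg β (u i))
      (fun i => levelNorm_le_sInf_lt hN hβ.2 (u i)) hlim
  · refine squeeze_zero (fun i => Real.sInf_nonneg fun _ ht => ht.1.le)
      (fun i => sInf_lt_le_levelNorm hN (β := 1 - α / 2) (by linarith [hα.1]) (by linarith [hα.1])
        (u i)) (h _ ⟨by linarith [hα.2], by linarith [hα.1]⟩)

def LevelTendsto (N : Y → ℝ → ℝ) (u : ι → Y) (F : Filter ι) (l : Y) : Prop :=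
  ∀ β ∈ Ioo (0:ℝ) 1, Tendsto (fun i => levelNorm N β (u i - l)) F (𝓝 0)

lemma LevelTendsto.smul {u : ι → Y} {l : Y} (h : LevelTendsto N u F l) (c : ℝ) :
    LevelTendsto N (fun i => c • u i) F (c • l) := by
  rcases eq_or_ne c 0 with rfl | hc
  · intro β hβ
    simp only [zero_smul, sub_self, levelNorm_zero hN hβ.2, tendsto_const_nhds]
  intro β hβ
  simpa only [← smul_sub, levelNorm_smul hN hc, mul_zero] using (h β hβ).const_mul (φ c)

variable (hstar : ∀ γ ∈ Ioo (0:ℝ) 1, ∃ δ ∈ Ioo (0:ℝ) 1, γ ≤ star δ δ)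
include hstar

lemma LevelTendsto.add {u v : ι → Y} {a b : Y} (hu : LevelTendsto N u F a)
    (hv : LevelTendsto N v F b) : LevelTendsto N (fun i => u i + v i) F (a + b) := by
  intro β hβ
  obtain ⟨δ, hδ, hβδ⟩ := hstar β hβ
  refine squeeze_zero (fun i => levelNorm_nonneg β _) (fun i => ?_)
    (by simpa using (hu δ hδ).add ((hv δ hδ).const_mul K))
  rw [add_sub_add_comm]
  exact levelNorm_add_le hN hδ.2 hβδ _ _

lemma LevelTendsto.unique [F.NeBot] {u : ι → Y} {a b : Y} (ha : LevelTendsto N u F a)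
    (hb : LevelTendsto N u F b) : a = b := by
  refine sub_eq_zero.1 (eq_zero_of_forall_levelNorm_eq_zero hN fun β hβ => ?_)
  obtain ⟨δ, hδ, hβδ⟩ := hstar β hβ
  refine le_antisymm (ge_of_tendsto' (by simpa using (ha δ hδ).add ((hb δ hδ).const_mul K))
    fun i => ?_) (levelNorm_nonneg β _)
  rw [← sub_add_sub_cancel a (u i) b, levelNorm_sub_comm hN δ (u i) a]
  exact levelNorm_add_le hN hδ.2 hβδ _ _

lemma exists_linearMap_levelTendsto {X : Type*} [AddCommGroup X] [Module ℝ X] [F.NeBot]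
    (T : ι → X →ₗ[ℝ] Y) (h : ∀ x, ∃ l, LevelTendsto N (fun i => T i x) F l) :
    ∃ S : X →ₗ[ℝ] Y, ∀ x, LevelTendsto N (fun i => T i x) F (S x) := by
  choose f hf using h
  refine ⟨{ toFun := f, map_add' := fun x y => ?_, map_smul' := fun c x => ?_ }, hf⟩
  · refine (hf (x + y)).unique hN hstar ?_
    simpa only [map_add] using (hf x).add hN hstar (hf y)
  · refine (hf (c • x)).unique hN hstar ?_
    simpa only [map_smul, RingHom.id_apply] using (hf x).smul hN c

end Convergence

section Operator

variable {X Y : Type*} [AddCommGroup X] [Module ℝ X] [AddCommGroup Y] [Module ℝ Y]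
  {N1 : X → ℝ → ℝ} {N2 : Y → ℝ → ℝ} {K : ℝ}

lemma fuzzyBounded_iff (hK : 0 < K) {U : X →ₗ[ℝ] Y} :
    FuzzyBounded N1 N2 K U ↔
      ∀ α ∈ Ioo (0:ℝ) 1, ∃ M > 0, ∀ x, levelNorm N2 α (U x) ≤ M * dd N1 α x := by
  have hscale : ∀ α y, sInf {t | 0 < t ∧ α ≤ N2 y (K * t)} = K⁻¹ * levelNorm N2 α y :=
    fun α y => sInf_setOf_pos_and_mul hK (fun t => α ≤ N2 y t)
  simp only [FuzzyBounded, hscale]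
  refine forall₂_congr fun α _ => ⟨fun ⟨M, hM, h⟩ => ⟨K * M, by positivity, fun x => ?_⟩,
    fun ⟨M, hM, h⟩ => ⟨K⁻¹ * M, by positivity, fun x => ?_⟩⟩
  · rw [mul_assoc, ← inv_mul_le_iff₀ hK]; exact h x
  · rw [mul_assoc]; exact mul_le_mul_of_nonneg_left (h x) (inv_nonneg.2 hK.le)

lemma opSup_eq (U : X →ₗ[ℝ] Y) (α : ℝ) :
    opSup N1 N2 U α = sSup {r | ∃ x, x ≠ 0 ∧ r = levelNorm N2 α (U x) / dd N1 α x} := by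
  simp only [opSup, sInf_image_div _ (dd_nonneg _ _)]
  rfl

lemma le_opN {U : X →ₗ[ℝ] Y} {α s : ℝ} (hα : α ∈ Ioo (0:ℝ) 1) (hs : s ≠ 0)
    (h : opSup N1 N2 U α ≤ s) : α ≤ opN N1 N2 U s := by
  rw [opN, if_neg fun h' => hs h'.2]
  exact le_csSup ⟨1, fun _ hβ => hβ.1.2.le⟩ ⟨hα, h⟩

def LevelwiseTendstoZero {ι : Type*} (N1 : X → ℝ → ℝ) (N2 : Y → ℝ → ℝ)
    (U : ι → X →ₗ[ℝ] Y) (F : Filter ι) : Prop :=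
  ∀ α ∈ Ioo (0:ℝ) 1, ∀ ε > 0, ∀ᶠ i in F, ∀ x, levelNorm N2 α (U i x) ≤ ε * dd N1 α x

lemma LevelwiseTendstoZero.tendsto_levelNorm_apply {ι : Type*} {F : Filter ι}
    {U : ι → X →ₗ[ℝ] Y} (h : LevelwiseTendstoZero N1 N2 U F) (x : X) :
    ∀ β ∈ Ioo (0:ℝ) 1, Tendsto (fun i => levelNorm N2 β (U i x)) F (𝓝 0) := by
  intro β hβ
  refine tendsto_zero_of_forall_eventually_le (fun i => levelNorm_nonneg β _) fun ε hε => ?_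
  have hd : 0 < dd N1 β x + 1 := by linarith [dd_nonneg (N := N1) β x]
  filter_upwards [h β hβ (ε / (dd N1 β x + 1)) (by positivity)] with i hi
  calc levelNorm N2 β (U i x) ≤ ε / (dd N1 β x + 1) * dd N1 β x := hi x
    _ ≤ ε / (dd N1 β x + 1) * (dd N1 β x + 1) := by gcongr; linarith
    _ = ε := div_mul_cancel₀ ε hd.ne'

variable {φ : ℝ → ℝ} {star1 star2 : ℝ → ℝ → ℝ}
  (hN1 : IsFuzzyPhiBNorm N1 φ K star1) (hN2 : IsFuzzyPhiBNorm N2 φ K star2)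
  (hstar : ∀ γ ∈ Ioo (0:ℝ) 1, ∃ δ ∈ Ioo (0:ℝ) 1, γ ≤ star2 δ δ)
  (hN6 : ∀ x : X, x ≠ 0 → ∀ α ∈ Ioo (0:ℝ) 1, 0 < dd N1 α x)

include hN2 in
lemma FuzzyBounded.neg {U : X →ₗ[ℝ] Y} (hU : FuzzyBounded N1 N2 K U) :
    FuzzyBounded N1 N2 K (-U) := by
  rw [fuzzyBounded_iff hN2.K_pos] at hU ⊢
  simpa only [LinearMap.neg_apply, levelNorm_neg hN2] using hU

include hN1 hN2 hstar in
lemma FuzzyBounded.add {U V : X →ₗ[ℝ] Y} (hU : FuzzyBounded N1 N2 K U)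
    (hV : FuzzyBounded N1 N2 K V) : FuzzyBounded N1 N2 K (U + V) := by
  have hK := hN2.K_pos
  rw [fuzzyBounded_iff hK] at hU hV ⊢
  intro α hα
  obtain ⟨δ, hδ, hαδ⟩ := hstar α hα
  obtain ⟨M, hM, hUM⟩ := hU δ hδ
  obtain ⟨M', hM', hVM'⟩ := hV δ hδ
  refine ⟨M + K * M', by positivity, fun x => ?_⟩
  have hdd := dd_anti hN1 hα.1 (hαδ.trans (hN2.tnorm.map_self_le (Ioo_subset_Icc_self hδ))) x
  calc levelNorm N2 α ((U + V) x)
      ≤ levelNorm N2 δ (U x) + K * levelNorm N2 δ (V x) := levelNorm_add_le hN2 hδ.2 hαδ _ _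
    _ ≤ M * dd N1 δ x + K * (M' * dd N1 δ x) :=
        add_le_add (hUM x) (mul_le_mul_of_nonneg_left (hVM' x) hK.le)
    _ = (M + K * M') * dd N1 δ x := by ring
    _ ≤ (M + K * M') * dd N1 α x := by gcongr

include hN1 hN2 hstar in
lemma FuzzyBounded.sub {U V : X →ₗ[ℝ] Y} (hU : FuzzyBounded N1 N2 K U)
    (hV : FuzzyBounded N1 N2 K V) : FuzzyBounded N1 N2 K (U - V) :=
  sub_eq_add_neg U V ▸ hU.add hN1 hN2 hstar (hV.neg hN2)

include hN6 in
lemma opSup_le {U : X →ₗ[ℝ] Y} {α c : ℝ} (hα : α ∈ Ioo (0:ℝ) 1) (hc : 0 ≤ c)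
    (h : ∀ x, x ≠ 0 → levelNorm N2 α (U x) ≤ c * dd N1 α x) : opSup N1 N2 U α ≤ c := by
  rw [opSup_eq]
  refine Real.sSup_le ?_ hc
  rintro _ ⟨x, hx, rfl⟩
  exact (div_le_iff₀ (hN6 x hx α hα)).2 (h x hx)

include hN2 hN6 in
lemma levelNorm_le_of_opSup_le {U : X →ₗ[ℝ] Y} (hU : FuzzyBounded N1 N2 K U) {α s : ℝ}
    (hα : α ∈ Ioo (0:ℝ) 1) (h : opSup N1 N2 U α ≤ s) {x : X} (hx : x ≠ 0) :
    levelNorm N2 α (U x) ≤ s * dd N1 α x := by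
  obtain ⟨M, -, hM⟩ := (fuzzyBounded_iff hN2.K_pos).1 hU α hα
  rw [opSup_eq] at h
  have hbdd : BddAbove {r | ∃ x, x ≠ 0 ∧ r = levelNorm N2 α (U x) / dd N1 α x} := by
    refine ⟨M, ?_⟩
    rintro _ ⟨y, hy, rfl⟩
    exact (div_le_iff₀ (hN6 y hy α hα)).2 (hM y)
  exact (div_le_iff₀ (hN6 x hx α hα)).1 ((le_csSup hbdd ⟨x, hx, rfl⟩).trans h)

include hN2 hN6 in
lemma exists_lt_opN {U : X →ₗ[ℝ] Y} (hU : FuzzyBounded N1 N2 K U) {γ : ℝ}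
    (hγ : γ ∈ Ioo (0:ℝ) 1) : ∃ s, 0 < s ∧ γ < opN N1 N2 U s := by
  have hβ : (γ + 1) / 2 ∈ Ioo (0:ℝ) 1 := by constructor <;> linarith [hγ.1, hγ.2]
  obtain ⟨M, hM, hUM⟩ := (fuzzyBounded_iff hN2.K_pos).1 hU _ hβ
  refine ⟨M, hM, lt_of_lt_of_le (by linarith [hγ.2]) (le_opN hβ hM.ne' ?_)⟩
  exact opSup_le hN6 hβ hM.le fun x _ => hUM x

include hN1 hN2 hN6 in
lemma levelNorm_le_of_lt_opN {U : X →ₗ[ℝ] Y} (hU : FuzzyBounded N1 N2 K U) {γ s : ℝ}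
    (hγ : γ ∈ Ioo (0:ℝ) 1) (hs : 0 < s) (h : γ < opN N1 N2 U s) (x : X) :
    levelNorm N2 γ (U x) ≤ s * dd N1 γ x := by
  rw [opN, if_neg fun h' => hs.ne' h'.2] at h
  have hne : {α | α ∈ Ioo (0:ℝ) 1 ∧ opSup N1 N2 U α ≤ s}.Nonempty := by
    by_contra hempty
    rw [not_nonempty_iff_eq_empty.1 hempty, Real.sSup_empty] at h
    exact hγ.1.not_gt h
  obtain ⟨α, ⟨hα, hαs⟩, hγα⟩ := exists_lt_of_lt_csSup hne h
  rcases eq_or_ne x 0 with rfl | hx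
  · rw [map_zero, levelNorm_zero hN2 hγ.2]
    exact mul_nonneg hs.le (dd_nonneg _ _)
  calc levelNorm N2 γ (U x) ≤ levelNorm N2 α (U x) := levelNorm_mono hN2 hα.2 hγα.le _
    _ ≤ s * dd N1 α x := levelNorm_le_of_opSup_le hN2 hN6 hU hα hαs hx
    _ ≤ s * dd N1 γ x := mul_le_mul_of_nonneg_left (dd_anti hN1 hγ.1 hγα.le x) hs.le

include hN1 hN2 hN6 in
lemma tendsto_opN_iff_levelwiseTendstoZero {ι : Type*} {F : Filter ι} {U : ι → X →ₗ[ℝ] Y}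
    (hU : ∀ i, FuzzyBounded N1 N2 K (U i)) :
    (∀ α ∈ Ioo (0:ℝ) 1,
      Tendsto (fun i => sInf {t | 0 < t ∧ 1 - α < opN N1 N2 (U i) t}) F (𝓝 0)) ↔
      LevelwiseTendstoZero N1 N2 U F := by
  refine ⟨fun h γ hγ ε hε => ?_, fun h α hα => ?_⟩
  · have hlim := h (1 - γ) ⟨by linarith [hγ.2], by linarith [hγ.1]⟩
    simp only [sub_sub_cancel] at hlim
    filter_upwards [hlim.eventually (eventually_lt_nhds hε)] with i hi x
    obtain ⟨s, ⟨hs, hγs⟩, hsε⟩ := exists_lt_of_csInf_lt (exists_lt_opN hN2 hN6 (hU i) hγ) hi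
    exact (levelNorm_le_of_lt_opN hN1 hN2 hN6 (hU i) hγ hs hγs x).trans
      (mul_le_mul_of_nonneg_right hsε.le (dd_nonneg _ _))
  · have hβ : 1 - α / 2 ∈ Ioo (0:ℝ) 1 := by constructor <;> linarith [hα.1, hα.2]
    refine tendsto_zero_of_forall_eventually_le (fun i => Real.sInf_nonneg fun _ ht => ht.1.le)
      fun ε hε => ?_
    filter_upwards [h _ hβ ε hε] with i hi
    refine csInf_le ⟨0, fun _ ht => ht.1.le⟩ ⟨hε, ?_⟩
    exact lt_of_lt_of_le (by linarith [hα.1])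
      (le_opN hβ hε.ne' (opSup_le hN6 hβ hε.le fun x _ => hi x))

include hN1 hN2 hstar in
lemma LevelwiseTendstoZero.sub_of_cauchy {ι : Type*} {F : Filter ι} [F.NeBot]
    {T : ι → X →ₗ[ℝ] Y} {S : X →ₗ[ℝ] Y}
    (hT : LevelwiseTendstoZero N1 N2 (fun p : ι × ι => T p.1 - T p.2) (F ×ˢ F))
    (hS : ∀ x, LevelTendsto N2 (fun i => T i x) F (S x)) :
    LevelwiseTendstoZero N1 N2 (fun i => T i - S) F := by
  intro γ hγ ε hε
  obtain ⟨δ, hδ, hγδ⟩ := hstar γ hγ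
  have hγδ' := hγδ.trans (hN2.tnorm.map_self_le (Ioo_subset_Icc_self hδ))
  filter_upwards [(hT δ hδ ε hε).curry] with i hi x
  have hlim : Tendsto (fun j => ε * dd N1 δ x + K * levelNorm N2 δ (T j x - S x)) F
      (𝓝 (ε * dd N1 δ x)) := by
    simpa using ((hS x) δ hδ).const_mul K |>.const_add (ε * dd N1 δ x)
  calc levelNorm N2 γ ((T i - S) x) ≤ ε * dd N1 δ x := by
        refine ge_of_tendsto hlim (hi.mono fun j hj => ?_)
        rw [LinearMap.sub_apply, ← sub_add_sub_cancel (T i x) (T j x) (S x)]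
        exact (levelNorm_add_le hN2 hδ.2 hγδ _ _).trans (by gcongr; exact hj x)
    _ ≤ ε * dd N1 γ x := by gcongr; exact dd_anti hN1 hγ.1 hγδ' x

include hN1 hN2 hstar in
lemma FuzzyBounded.of_levelwiseTendstoZero {ι : Type*} {F : Filter ι} [F.NeBot]
    {T : ι → X →ₗ[ℝ] Y} {S : X →ₗ[ℝ] Y} (hT : ∀ i, FuzzyBounded N1 N2 K (T i))
    (hTS : LevelwiseTendstoZero N1 N2 (fun i => T i - S) F) : FuzzyBounded N1 N2 K S := by
  have hK := hN2.K_pos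
  rw [fuzzyBounded_iff hK]
  intro α hα
  obtain ⟨δ, hδ, hαδ⟩ := hstar α hα
  obtain ⟨i, hi⟩ := (hTS δ hδ 1 one_pos).exists
  obtain ⟨M, hM, hTM⟩ := (fuzzyBounded_iff hK).1 (hT i) δ hδ
  refine ⟨1 + K * M, by positivity, fun x => ?_⟩
  have hdd := dd_anti hN1 hα.1 (hαδ.trans (hN2.tnorm.map_self_le (Ioo_subset_Icc_self hδ))) x
  calc levelNorm N2 α (S x) = levelNorm N2 α ((S x - T i x) + T i x) := by rw [sub_add_cancel]
    _ ≤ levelNorm N2 δ (T i x - S x) + K * levelNorm N2 δ (T i x) := by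
        rw [levelNorm_sub_comm hN2 δ (T i x)]; exact levelNorm_add_le hN2 hδ.2 hαδ _ _
    _ ≤ 1 * dd N1 δ x + K * (M * dd N1 δ x) :=
        add_le_add (hi x) (mul_le_mul_of_nonneg_left (hTM x) hK.le)
    _ = (1 + K * M) * dd N1 δ x := by ring
    _ ≤ (1 + K * M) * dd N1 α x := by gcongr

end Operator

theorem stmt14 {X Y : Type*} [AddCommGroup X] [Module ℝ X] [AddCommGroup Y] [Module ℝ Y]
    (N1 : X → ℝ → ℝ) (N2 : Y → ℝ → ℝ) (φ : ℝ → ℝ) (K : ℝ)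
    (star1 star2 : ℝ → ℝ → ℝ)
    (hN1 : IsFuzzyPhiBNorm N1 φ K star1) (hN2 : IsFuzzyPhiBNorm N2 φ K star2)
    (hN6 : ∀ x : X, x ≠ 0 → ∀ α ∈ Set.Ioo (0:ℝ) 1, 0 < dd N1 α x)
    (hlsc : ∀ β ∈ Set.Ioo (0:ℝ) 1, ∃ α ∈ Set.Ioo (0:ℝ) 1,
        1 - β < star2 (1 - α) (1 - α))
    (hYcomplete : ∀ ys : ℕ → Y,
      (∀ α ∈ Set.Ioo (0:ℝ) 1,
        Tendsto (fun p : ℕ × ℕ => sInf {t | 0 < t ∧ 1 - α < N2 (ys p.1 - ys p.2) t})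
          atTop (nhds 0)) →
      ∃ l : Y, ∀ α ∈ Set.Ioo (0:ℝ) 1,
        Tendsto (fun n => sInf {t | 0 < t ∧ 1 - α < N2 (ys n - l) t}) atTop (nhds 0))
    (T : ℕ → X →ₗ[ℝ] Y) (hTb : ∀ n, FuzzyBounded N1 N2 K (T n))
    (hCauchy : ∀ α ∈ Set.Ioo (0:ℝ) 1,
      Tendsto (fun p : ℕ × ℕ => sInf {t | 0 < t ∧ 1 - α < opN N1 N2 (T p.1 - T p.2) t})
        atTop (nhds 0)) :
    ∃ S : X →ₗ[ℝ] Y, FuzzyBounded N1 N2 K S ∧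
      ∀ α ∈ Set.Ioo (0:ℝ) 1,
        Tendsto (fun n => sInf {t | 0 < t ∧ 1 - α < opN N1 N2 (T n - S) t}) atTop (nhds 0) := by
  have hstar : ∀ γ ∈ Ioo (0:ℝ) 1, ∃ δ ∈ Ioo (0:ℝ) 1, γ ≤ star2 δ δ := fun γ hγ => by
    obtain ⟨α, hα, h⟩ := hlsc (1 - γ) ⟨by linarith [hγ.2], by linarith [hγ.1]⟩
    exact ⟨1 - α, ⟨by linarith [hα.2], by linarith [hα.1]⟩, by linarith⟩
  have hC : LevelwiseTendstoZero N1 N2 (fun p : ℕ × ℕ => T p.1 - T p.2) (atTop ×ˢ atTop) := by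
    rw [prod_atTop_atTop_eq]
    exact (tendsto_opN_iff_levelwiseTendstoZero hN1 hN2 hN6
      (U := fun p : ℕ × ℕ => T p.1 - T p.2) fun p => (hTb p.1).sub hN1 hN2 hstar (hTb p.2)).1
      hCauchy
  obtain ⟨S, hS⟩ := exists_linearMap_levelTendsto hN2 hstar T fun x => by
    have hCx := hC.tendsto_levelNorm_apply x
    rw [prod_atTop_atTop_eq] at hCx
    obtain ⟨l, hl⟩ := hYcomplete (fun n => T n x)
      ((tendsto_sInf_lt_iff hN2 (u := fun p : ℕ × ℕ => T p.1 x - T p.2 x)).2 hCx)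
    exact ⟨l, (tendsto_sInf_lt_iff hN2 (u := fun n => T n x - l)).1 hl⟩
  have hTS := hC.sub_of_cauchy hN1 hN2 hstar hS
  have hSb := FuzzyBounded.of_levelwiseTendstoZero hN1 hN2 hstar hTb hTS
  exact ⟨S, hSb, (tendsto_opN_iff_levelwiseTendstoZero hN1 hN2 hN6 (U := fun n => T n - S)
    fun n => (hTb n).sub hN1 hN2 hstar hSb).2 hTS⟩
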